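/- Suppose a top-down clustering algorithm on each recursive call on vertex set S finds a split (S₁, S₂) whose sparsity w(S₁,S₂)/(|S₁|·|S₂|) is at most α_n times the minimum sparsity over all splits of S, where (α_n) is positive and nondecreasing. Then the resulting tree T satisfies cost_G(T) ≤ (27α_n/4)·(ln n)·cost_G(T*), where T* minimizes cost_G. -/

import Mathlib

open Finset

/-- A rooted binary tree whose leaves are labeled by elements of `Fin n`. -/
inductive HTree (n : ℕ) : Type where
  | leaf : Fin n → HTree n
  | node : HTree n → HTree n → HTree n

namespace HTree

variable {n : ℕ}

/-- The list of leaf labels, left to right. -/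
def leafList : HTree n → List (Fin n)
  | .leaf v => [v]
  | .node l r => l.leafList ++ r.leafList

/-- The set of leaf labels of a tree. -/
def leaves (T : HTree n) : Finset (Fin n) := T.leafList.toFinset

/-- `T` is a hierarchical clustering tree of the whole vertex set `Fin n`:
its leaves are in one-to-one correspondence with `Fin n`. -/
def IsFullTree (T : HTree n) : Prop := T.leafList.Nodup ∧ T.leaves = Finset.univ

/-- `|leaves(T[i ∨ j])|`: the number of leaves of the subtree rooted at the
lowest common ancestor of leaves `i` and `j`. -/
def lcaSize : HTree n → Fin n → Fin n → ℕ
  | .leaf _, _, _ => 1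
  | .node l r, i, j =>
    if i ∈ l.leaves ∧ j ∈ l.leaves then l.lcaSize i j
    else if i ∈ r.leaves ∧ j ∈ r.leaves then r.lcaSize i j
    else (l.leaves ∪ r.leaves).card

/-- `cost_G(T) = Σ_{{i,j}} w_{ij} |leaves(T[i ∨ j])|`, the sum being over
unordered pairs (represented as ordered pairs `p.1 < p.2`). -/
def pairCost (w : Fin n → Fin n → ℝ) (T : HTree n) : ℝ :=
  ∑ p ∈ Finset.univ.filter (fun p : Fin n × Fin n => p.1 < p.2),
    w p.1 p.2 * (T.lcaSize p.1 p.2 : ℝ)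

/-- `w(A, B)`: total weight of edges between `A` and `B`. -/
def cut (w : Fin n → Fin n → ℝ) (A B : Finset (Fin n)) : ℝ :=
  ∑ i ∈ A, ∑ j ∈ B, w i j

/-- The sum-of-splits formulation of the cost:
`Σ over internal splits S → (S₁,S₂) of |S| ⬝ w(S₁,S₂)`. -/
def splitCost (w : Fin n → Fin n → ℝ) : HTree n → ℝ
  | .leaf _ => 0
  | .node l r =>
      ((l.leaves ∪ r.leaves).card : ℝ) * cut w l.leaves r.leaves
        + splitCost w l + splitCost w r

/-- `Subtree t T`: `t` occurs as a subtree of `T`. -/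
inductive Subtree : HTree n → HTree n → Prop
  | refl (t : HTree n) : Subtree t t
  | left {t l r : HTree n} : Subtree t l → Subtree t (.node l r)
  | right {t l r : HTree n} : Subtree t r → Subtree t (.node l r)

end HTree

namespace HTree

/-- Every internal split of the tree is an `α_{|S|}`-approximation to the sparsest
cut of its leaf set `S`: its sparsity `w(S₁,S₂)/(|S₁||S₂|)` is at most `α_{|S|}`
times the sparsity of every cut of `S`. -/
def SparseSplits (w : Fin n → Fin n → ℝ) (α : ℕ → ℝ) : HTree n → Prop
  | .leaf _ => True
  | .node l r =>
      (∀ A : Finset (Fin n), A ⊆ l.leaves ∪ r.leaves → A.Nonempty →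
          ((l.leaves ∪ r.leaves) \ A).Nonempty →
          cut w l.leaves r.leaves / ((l.leaves.card : ℝ) * (r.leaves.card : ℝ))
            ≤ α (l.leaves ∪ r.leaves).card *
                (cut w A ((l.leaves ∪ r.leaves) \ A)
                  / ((A.card : ℝ) * (((l.leaves ∪ r.leaves) \ A).card : ℝ))))
        ∧ SparseSplits w α l ∧ SparseSplits w α r

end HTree

/-!
Induct over the tree `T` built by the algorithm, comparing it with an arbitrary tree `T'` on the
same leaves. At a split `S → (S₁, S₂)` of `T`, walking down `T'` into children with more than
`2|S|/3` leaves reaches a balanced cut `A` of `S` whose sparsity is at most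
`27 cost(T') / (4|S|³)`; as the split is an `α`-approximate sparsest cut,
`|S| w(S₁, S₂) ≤ (27α/4) (|S₁||S₂|/|S|²) cost(T')`. Restricting `T'` to `S₁` and to `S₂` gives
trees of total cost at most `cost(T')`, which the induction hypothesis compares with the two
subtrees, and the potential `log |S|` absorbs the top split because
`log |S₁| ≤ log |S| - |S₂|/|S|` (from `log x ≤ x - 1`) and `|S₁||S₂|/|S|² ≤ 1/4 < log 2`.
-/

namespace HTree

variable {n : ℕ} {w : Fin n → Fin n → ℝ}

lemma leafList_ne_nil : ∀ t : HTree n, t.leafList ≠ []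
  | .leaf _ => by simp [leafList]
  | .node l _ => by simp [leafList, leafList_ne_nil l]

lemma leaves_nonempty (t : HTree n) : t.leaves.Nonempty := by
  obtain ⟨v, hv⟩ := List.exists_mem_of_ne_nil _ t.leafList_ne_nil
  exact ⟨v, List.mem_toFinset.2 hv⟩

@[simp]
lemma leaves_node (l r : HTree n) : (node l r).leaves = l.leaves ∪ r.leaves := by
  simp [leaves, leafList]

lemma nodup_leafList_node {l r : HTree n} (h : (node l r).leafList.Nodup) :
    l.leafList.Nodup ∧ r.leafList.Nodup ∧ Disjoint l.leaves r.leaves := by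
  rw [leafList, List.nodup_append] at h
  refine ⟨h.1, h.2.1, Finset.disjoint_left.2 fun a ha hb => ?_⟩
  exact h.2.2 a (List.mem_toFinset.1 ha) a (List.mem_toFinset.1 hb) rfl

lemma cut_nonneg (hw : ∀ i j, 0 ≤ w i j) (A B : Finset (Fin n)) : 0 ≤ cut w A B :=
  Finset.sum_nonneg fun i _ => Finset.sum_nonneg fun j _ => hw i j

lemma cut_mono (hw : ∀ i j, 0 ≤ w i j) {A A' B B' : Finset (Fin n)} (hA : A ⊆ A')
    (hB : B ⊆ B') : cut w A B ≤ cut w A' B' :=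
  Finset.sum_le_sum_of_subset_of_nonneg hA (fun i _ _ => Finset.sum_nonneg fun j _ => hw i j)
    |>.trans' <| Finset.sum_le_sum fun i _ =>
      Finset.sum_le_sum_of_subset_of_nonneg hB fun j _ _ => hw i j

lemma cut_union_left {A B : Finset (Fin n)} (h : Disjoint A B) (C : Finset (Fin n)) :
    cut w (A ∪ B) C = cut w A C + cut w B C :=
  Finset.sum_union h

lemma cut_union_right {B C : Finset (Fin n)} (h : Disjoint B C) (A : Finset (Fin n)) :
    cut w A (B ∪ C) = cut w A B + cut w A C := by
  simp only [cut, Finset.sum_union h, Finset.sum_add_distrib]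

lemma cut_comm (hsymm : ∀ i j, w i j = w j i) (A B : Finset (Fin n)) :
    cut w A B = cut w B A := by
  rw [cut, cut, Finset.sum_comm]
  simp only [hsymm]

lemma splitCost_nonneg (hw : ∀ i j, 0 ≤ w i j) : ∀ t : HTree n, 0 ≤ splitCost w t
  | .leaf _ => le_rfl
  | .node l r => by
    have := cut_nonneg hw l.leaves r.leaves
    have := splitCost_nonneg hw l
    have := splitCost_nonneg hw r
    rw [splitCost]
    positivity

lemma splitCost_node (l r : HTree n) : splitCost w (node l r) =
    (#(l.leaves ∪ r.leaves) : ℝ) * cut w l.leaves r.leaves + splitCost w l + splitCost w r :=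
  rfl

def restrict : HTree n → Finset (Fin n) → Option (HTree n)
  | .leaf v, A => if v ∈ A then some (.leaf v) else none
  | .node l r, A => Option.merge node (l.restrict A) (r.restrict A)

lemma elim_restrict_leafList (t : HTree n) (A : Finset (Fin n)) :
    (t.restrict A).elim [] leafList = t.leafList.filter (· ∈ A) := by
  induction t with
  | leaf v => by_cases h : v ∈ A <;> simp [restrict, leafList, h]
  | node l r ihl ihr =>
    rw [leafList, List.filter_append, ← ihl, ← ihr, restrict]
    rcases l.restrict A with _ | l' <;> rcases r.restrict A with _ | r' <;>
      simp [Option.merge, leafList]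

lemma leaves_of_restrict_eq_some {t t' : HTree n} {A : Finset (Fin n)}
    (h : t.restrict A = some t') : t'.leaves = t.leaves ∩ A := by
  have := congrArg List.toFinset (elim_restrict_leafList t A)
  rw [h, Option.elim, List.toFinset_filter] at this
  ext; simp [leaves, this]

lemma exists_restrict_eq_some {t : HTree n} {A : Finset (Fin n)} (hnd : t.leafList.Nodup)
    (hA : A ⊆ t.leaves) (hne : A.Nonempty) :
    ∃ t', t.restrict A = some t' ∧ t'.leafList.Nodup ∧ t'.leaves = A := by
  have hfilter := elim_restrict_leafList t A
  rcases h : t.restrict A with _ | t'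
  · obtain ⟨a, ha⟩ := hne
    rw [h, Option.elim, eq_comm, List.filter_eq_nil_iff] at hfilter
    exact absurd ha (by simpa using hfilter a (List.mem_toFinset.1 (hA ha)))
  · rw [h, Option.elim] at hfilter
    exact ⟨t', rfl, hfilter ▸ hnd.filter _, by
      rw [leaves_of_restrict_eq_some h, Finset.inter_eq_right.2 hA]⟩

def restrictCost (w : Fin n → Fin n → ℝ) (t : HTree n) (A : Finset (Fin n)) : ℝ :=
  (t.restrict A).elim 0 (splitCost w)

lemma restrictCost_nonneg (hw : ∀ i j, 0 ≤ w i j) (t : HTree n) (A : Finset (Fin n)) :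
    0 ≤ restrictCost w t A := by
  unfold restrictCost
  rcases t.restrict A with _ | t'
  exacts [le_rfl, splitCost_nonneg hw t']

lemma restrictCost_node_le (hw : ∀ i j, 0 ≤ w i j) (l r : HTree n) (A : Finset (Fin n)) :
    restrictCost w (node l r) A ≤ (#(l.leaves ∪ r.leaves) : ℝ) *
      cut w (l.leaves ∩ A) (r.leaves ∩ A) + restrictCost w l A + restrictCost w r A := by
  have hcut : 0 ≤ (#(l.leaves ∪ r.leaves) : ℝ) * cut w (l.leaves ∩ A) (r.leaves ∩ A) :=
    mul_nonneg (Nat.cast_nonneg _) (cut_nonneg hw _ _)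
  have hl := restrictCost_nonneg hw l A
  have hr := restrictCost_nonneg hw r A
  unfold restrictCost at hl hr ⊢
  rcases hl' : l.restrict A with _ | l' <;> rcases hr' : r.restrict A with _ | r' <;>
    simp only [restrict, hl', hr', Option.merge, Option.elim] at hl hr ⊢
  · linarith
  · linarith
  · linarith
  · rw [splitCost_node, leaves_of_restrict_eq_some hl', leaves_of_restrict_eq_some hr']
    gcongr
    · exact cut_nonneg hw _ _
    all_goals exact Finset.inter_subset_left

lemma restrictCost_add_le (hw : ∀ i j, 0 ≤ w i j) (t : HTree n) {A B : Finset (Fin n)}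
    (hAB : Disjoint A B) : restrictCost w t A + restrictCost w t B ≤ splitCost w t := by
  induction t with
  | leaf v =>
    have (C : Finset (Fin n)) : restrictCost w (leaf v) C = 0 := by
      unfold restrictCost restrict; split_ifs <;> rfl
    simp [this, splitCost]
  | node l r ihl ihr =>
    set L := l.leaves
    set R := r.leaves
    have hcut : cut w (L ∩ A) (R ∩ A) + cut w (L ∩ B) (R ∩ B) ≤ cut w L R := by
      have hdisj : Disjoint (L ∩ A) (L ∩ B) :=
        hAB.mono Finset.inter_subset_right Finset.inter_subset_right
      calc cut w (L ∩ A) (R ∩ A) + cut w (L ∩ B) (R ∩ B)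
          ≤ cut w (L ∩ A) R + cut w (L ∩ B) R := by
            gcongr <;> exact cut_mono hw subset_rfl Finset.inter_subset_left
        _ = cut w ((L ∩ A) ∪ (L ∩ B)) R := (cut_union_left hdisj R).symm
        _ ≤ cut w L R := cut_mono hw
            (Finset.union_subset Finset.inter_subset_left Finset.inter_subset_left) subset_rfl
    have := restrictCost_node_le hw l r A
    have := restrictCost_node_le hw l r B
    have := mul_le_mul_of_nonneg_left hcut (Nat.cast_nonneg #(L ∪ R) : (0 : ℝ) ≤ _)
    rw [splitCost_node]
    linarith

lemma cut_sdiff_le_of_subset_left (hw : ∀ i j, 0 ≤ w i j) {A L R : Finset (Fin n)}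
    (hA : A ⊆ L) (hLR : Disjoint L R) :
    cut w A ((L ∪ R) \ A) ≤ cut w A (L \ A) + cut w L R := by
  rw [Finset.union_sdiff_distrib, Finset.sdiff_eq_self_of_disjoint (hLR.mono_left hA).symm,
    cut_union_right (hLR.mono_left Finset.sdiff_subset)]
  gcongr
  exact cut_mono hw hA subset_rfl

lemma cut_sdiff_le_of_subset_right (hw : ∀ i j, 0 ≤ w i j) (hsymm : ∀ i j, w i j = w j i)
    {A L R : Finset (Fin n)} (hA : A ⊆ R) (hLR : Disjoint L R) :
    cut w A ((L ∪ R) \ A) ≤ cut w A (R \ A) + cut w L R := by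
  rw [Finset.union_comm, cut_comm hsymm L]
  exact cut_sdiff_le_of_subset_left hw hA hLR.symm

/-- Descend into children with more than `2m/3` leaves; the boundary of the subtree reached is
paid for by the splits above it. -/
lemma exists_balanced_cut (hw : ∀ i j, 0 ≤ w i j) (hsymm : ∀ i j, w i j = w j i) {m : ℕ}
    (hm : 2 ≤ m) (t : HTree n) (hnd : t.leafList.Nodup) (hbig : 2 * m < 3 * #t.leaves) :
    ∃ A ⊆ t.leaves, m ≤ 3 * #A ∧ 3 * #A ≤ 2 * m ∧
      (2 * m : ℝ) * cut w A (t.leaves \ A) ≤ 3 * splitCost w t := by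
  induction t with
  | leaf v =>
    simp [leaves, leafList] at hbig
    omega
  | node l r ihl ihr =>
    obtain ⟨hndl, hndr, hLR⟩ := nodup_leafList_node hnd
    rw [leaves_node, Finset.card_union_of_disjoint hLR] at hbig
    rw [leaves_node, splitCost_node]
    have hcut := cut_nonneg hw l.leaves r.leaves
    have hl := splitCost_nonneg hw l
    have hr := splitCost_nonneg hw r
    have hbig' : (2 * m : ℝ) ≤ 3 * (#(l.leaves ∪ r.leaves) : ℝ) := by
      rw [Finset.card_union_of_disjoint hLR]
      exact_mod_cast hbig.le
    have htop := mul_le_mul_of_nonneg_right hbig' hcut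
    by_cases hlbig : 2 * m < 3 * #l.leaves
    · obtain ⟨A, hA, hA₁, hA₂, hAcut⟩ := ihl hndl hlbig
      refine ⟨A, hA.trans Finset.subset_union_left, hA₁, hA₂, ?_⟩
      have := mul_le_mul_of_nonneg_left (cut_sdiff_le_of_subset_left hw hA hLR)
        (by positivity : (0 : ℝ) ≤ 2 * m)
      linarith
    by_cases hrbig : 2 * m < 3 * #r.leaves
    · obtain ⟨A, hA, hA₁, hA₂, hAcut⟩ := ihr hndr hrbig
      refine ⟨A, hA.trans Finset.subset_union_right, hA₁, hA₂, ?_⟩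
      have := mul_le_mul_of_nonneg_left (cut_sdiff_le_of_subset_right hw hsymm hA hLR)
        (by positivity : (0 : ℝ) ≤ 2 * m)
      linarith
    by_cases hlsmall : m ≤ 3 * #l.leaves
    · refine ⟨l.leaves, Finset.subset_union_left, hlsmall, by omega, ?_⟩
      rw [Finset.union_sdiff_cancel_left hLR]
      linarith
    · refine ⟨r.leaves, Finset.subset_union_right, by omega, by omega, ?_⟩
      rw [Finset.union_sdiff_cancel_right hLR, cut_comm hsymm]
      linarith

lemma two_mul_sq_le_nine_mul_mul_sub {s x : ℝ} (h₁ : s ≤ 3 * x) (h₂ : 3 * x ≤ 2 * s) :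
    2 * s ^ 2 ≤ 9 * (x * (s - x)) := by
  nlinarith [mul_nonneg (sub_nonneg.2 h₁) (sub_nonneg.2 h₂)]

lemma exists_sparse_cut (hw : ∀ i j, 0 ≤ w i j) (hsymm : ∀ i j, w i j = w j i)
    (t : HTree n) (hnd : t.leafList.Nodup) (ht : 2 ≤ #t.leaves) :
    ∃ A ⊆ t.leaves, A.Nonempty ∧ (t.leaves \ A).Nonempty ∧
      cut w A (t.leaves \ A) / ((#A : ℝ) * #(t.leaves \ A))
        ≤ 27 / (4 * (#t.leaves : ℝ) ^ 3) * splitCost w t := by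
  obtain ⟨A, hA, hA₁, hA₂, hAcut⟩ := exists_balanced_cut hw hsymm ht t hnd (by omega)
  have hAne : A.Nonempty := Finset.card_pos.1 (by omega)
  have hsdiff := Finset.card_sdiff_add_card_eq_card hA
  have hAcne : (t.leaves \ A).Nonempty := Finset.card_pos.1 (by omega)
  refine ⟨A, hA, hAne, hAcne, ?_⟩
  have hy : (#(t.leaves \ A) : ℝ) = #t.leaves - #A := by
    rw [eq_sub_iff_add_eq]; exact_mod_cast hsdiff
  have hprod := two_mul_sq_le_nine_mul_mul_sub (s := #t.leaves) (x := #A)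
    (by exact_mod_cast hA₁) (by exact_mod_cast hA₂)
  have hxy : (0 : ℝ) < #A * #(t.leaves \ A) := by
    have := hAne.card_pos; have := hAcne.card_pos; positivity
  have hcost := splitCost_nonneg hw t
  rw [div_le_iff₀ hxy, div_mul_eq_mul_div, div_mul_eq_mul_div, le_div_iff₀ (by positivity), hy]
  nlinarith [mul_le_mul_of_nonneg_left hAcut (by positivity : (0 : ℝ) ≤ 2 * (#t.leaves : ℝ) ^ 2),
    mul_le_mul_of_nonneg_right hprod (by positivity : (0 : ℝ) ≤ 3 * splitCost w t)]

lemma exists_restrict_splitCost_add_le (hw : ∀ i j, 0 ≤ w i j) {t : HTree n}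
    (hnd : t.leafList.Nodup) {A B : Finset (Fin n)} (hAB : Disjoint A B) (hA : A ⊆ t.leaves)
    (hB : B ⊆ t.leaves) (hAne : A.Nonempty) (hBne : B.Nonempty) :
    ∃ tA tB : HTree n, tA.leafList.Nodup ∧ tA.leaves = A ∧ tB.leafList.Nodup ∧
      tB.leaves = B ∧ splitCost w tA + splitCost w tB ≤ splitCost w t := by
  obtain ⟨tA, htA, hndA, hlvA⟩ := exists_restrict_eq_some hnd hA hAne
  obtain ⟨tB, htB, hndB, hlvB⟩ := exists_restrict_eq_some hnd hB hBne
  refine ⟨tA, tB, hndA, hlvA, hndB, hlvB, ?_⟩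
  have := restrictCost_add_le hw t hAB
  rwa [restrictCost, restrictCost, htA, htB] at this

lemma SparseSplits.card_mul_cut_le (hw : ∀ i j, 0 ≤ w i j) (hsymm : ∀ i j, w i j = w j i)
    {α : ℕ → ℝ} (hαpos : ∀ m, 0 < α m) {l r : HTree n} (hsp : (node l r).SparseSplits w α)
    (hLR : Disjoint l.leaves r.leaves) (t' : HTree n) (hnd' : t'.leafList.Nodup)
    (hleaves : t'.leaves = l.leaves ∪ r.leaves) :
    (#(l.leaves ∪ r.leaves) : ℝ) * cut w l.leaves r.leaves ≤ 27 * α #(l.leaves ∪ r.leaves) / 4 *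
      (#l.leaves * #r.leaves / (#(l.leaves ∪ r.leaves) : ℝ) ^ 2) * splitCost w t' := by
  have ha := (leaves_nonempty l).card_pos
  have hb := (leaves_nonempty r).card_pos
  have hcard := Finset.card_union_of_disjoint hLR
  obtain ⟨A, hA, hAne, hAcne, hAsparse⟩ :=
    exists_sparse_cut hw hsymm t' hnd' (by rw [hleaves]; omega)
  rw [hleaves] at hA hAcne hAsparse
  have hsparse := (hsp.1 A hA hAne hAcne).trans
    (mul_le_mul_of_nonneg_left hAsparse (hαpos _).le)
  rw [div_le_iff₀ (by positivity)] at hsparse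
  calc (#(l.leaves ∪ r.leaves) : ℝ) * cut w l.leaves r.leaves
      ≤ #(l.leaves ∪ r.leaves) * (α #(l.leaves ∪ r.leaves) *
          (27 / (4 * (#(l.leaves ∪ r.leaves) : ℝ) ^ 3) * splitCost w t') *
            (#l.leaves * #r.leaves)) := by gcongr
    _ = _ := by field_simp

lemma log_le_log_add_sub_div {a b : ℝ} (ha : 0 < a) (hb : 0 ≤ b) :
    Real.log a ≤ Real.log (a + b) - b / (a + b) := by
  have hab : 0 < a + b := by positivity
  have := Real.log_le_sub_one_of_pos (div_pos ha hab)
  rw [Real.log_div ha.ne' hab.ne'] at this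
  have : a / (a + b) - 1 = -(b / (a + b)) := by field_simp; ring
  linarith

lemma div_sq_mul_add_log_mul_add_log_mul_le {a b O O₁ O₂ : ℝ} (ha : 1 ≤ a) (hb : 1 ≤ b)
    (hO₁ : 0 ≤ O₁) (hO₂ : 0 ≤ O₂) (hO : O₁ + O₂ ≤ O) :
    a * b / (a + b) ^ 2 * O + Real.log a * O₁ + Real.log b * O₂ ≤ Real.log (a + b) * O := by
  have hs : (0 : ℝ) < a + b := by linarith
  have hloga := log_le_log_add_sub_div (a := a) (b := b) (by linarith) (by linarith)
  have hlogb := log_le_log_add_sub_div (a := b) (b := a) (by linarith) (by linarith)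
  rw [add_comm b a] at hlogb
  have hpa : a * b / (a + b) ^ 2 ≤ b / (a + b) := by
    rw [div_le_div_iff₀ (by positivity) hs]; nlinarith [mul_nonneg (sq_nonneg b) hs.le]
  have hpb : a * b / (a + b) ^ 2 ≤ a / (a + b) := by
    rw [div_le_div_iff₀ (by positivity) hs]; nlinarith [mul_nonneg (sq_nonneg a) hs.le]
  have hplog : a * b / (a + b) ^ 2 ≤ Real.log (a + b) := by
    have : Real.log 2 ≤ Real.log (a + b) := Real.log_le_log (by norm_num) (by linarith)
    have : a * b / (a + b) ^ 2 ≤ 1 / 4 := by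
      rw [div_le_div_iff₀ (by positivity) (by norm_num)]; nlinarith [sq_nonneg (a - b)]
    linarith [Real.log_two_gt_d9]
  nlinarith [mul_le_mul_of_nonneg_right hloga hO₁, mul_le_mul_of_nonneg_right hlogb hO₂,
    mul_le_mul_of_nonneg_right hpa hO₁, mul_le_mul_of_nonneg_right hpb hO₂,
    mul_le_mul_of_nonneg_right hplog (by linarith : 0 ≤ O - O₁ - O₂)]

theorem splitCost_le_of_sparseSplits (hw : ∀ i j, 0 ≤ w i j) (hsymm : ∀ i j, w i j = w j i)
    {α : ℕ → ℝ} (hαpos : ∀ m, 0 < α m) (hαmono : Monotone α) {t : HTree n}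
    (hnd : t.leafList.Nodup) (hsp : t.SparseSplits w α) {t' : HTree n}
    (hnd' : t'.leafList.Nodup) (hleaves : t'.leaves = t.leaves) :
    splitCost w t ≤ 27 * α #t.leaves / 4 * Real.log #t.leaves * splitCost w t' := by
  induction t generalizing t' with
  | leaf v => simp [splitCost, leaves, leafList]
  | node l r ihl ihr =>
    obtain ⟨hndl, hndr, hLR⟩ := nodup_leafList_node hnd
    rw [leaves_node] at hleaves ⊢
    obtain ⟨tl, tr, hndl', hlvl, hndr', hlvr, hsub⟩ :=
      exists_restrict_splitCost_add_le hw hnd' hLR (hleaves ▸ Finset.subset_union_left)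
        (hleaves ▸ Finset.subset_union_right) (leaves_nonempty l) (leaves_nonempty r)
    have hcostl := ihl hndl hsp.2.1 hndl' hlvl
    have hcostr := ihr hndr hsp.2.2 hndr' hlvr
    have htop := hsp.card_mul_cut_le hw hsymm hαpos hLR t' hnd' hleaves
    have ha : (1 : ℝ) ≤ #l.leaves := by exact_mod_cast (leaves_nonempty l).card_pos
    have hb : (1 : ℝ) ≤ #r.leaves := by exact_mod_cast (leaves_nonempty r).card_pos
    have hαl : α #l.leaves ≤ α #(l.leaves ∪ r.leaves) :=
      hαmono (Finset.card_le_card Finset.subset_union_left)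
    have hαr : α #r.leaves ≤ α #(l.leaves ∪ r.leaves) :=
      hαmono (Finset.card_le_card Finset.subset_union_right)
    have hcostl' : splitCost w l ≤
        27 * α #(l.leaves ∪ r.leaves) / 4 * Real.log #l.leaves * splitCost w tl :=
      hcostl.trans (by gcongr; exact splitCost_nonneg hw tl)
    have hcostr' : splitCost w r ≤
        27 * α #(l.leaves ∪ r.leaves) / 4 * Real.log #r.leaves * splitCost w tr :=
      hcostr.trans (by gcongr; exact splitCost_nonneg hw tr)
    have hpot := mul_le_mul_of_nonneg_left
      (div_sq_mul_add_log_mul_add_log_mul_le ha hb (splitCost_nonneg hw tl)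
        (splitCost_nonneg hw tr) hsub)
      (by linarith [hαpos #(l.leaves ∪ r.leaves)] : 0 ≤ 27 * α #(l.leaves ∪ r.leaves) / 4)
    have hcast : (#(l.leaves ∪ r.leaves) : ℝ) = #l.leaves + #r.leaves := by
      rw [Finset.card_union_of_disjoint hLR]; push_cast; rfl
    rw [splitCost_node]
    rw [hcast] at htop ⊢
    linarith

end HTree

theorem topdown_approximation_general (n : ℕ) (w : Fin n → Fin n → ℝ)
    (hsymm : ∀ i j, w i j = w j i) (hnonneg : ∀ i j, 0 ≤ w i j)
    (α : ℕ → ℝ) (hαpos : ∀ m, 0 < α m) (hαmono : Monotone α)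
    (T : HTree n) (hT : T.IsFullTree) (halg : T.SparseSplits w α)
    (Tstar : HTree n) (hTs : Tstar.IsFullTree) :
    T.splitCost w ≤ (27 * α n / 4) * Real.log n * Tstar.splitCost w := by
  have := HTree.splitCost_le_of_sparseSplits hnonneg hsymm hαpos hαmono hT.1 halg hTs.1
    (hTs.2.trans hT.2.symm)
  rwa [hT.2, Finset.card_univ, Fintype.card_fin] at this

/-- The top-down heuristic that recursively splits using an `α`-approximate
sparsest cut returns a tree of cost at most `(27 α_n / 4) ln n` times optimal. -/
theorem topdown_approximation (n : ℕ) (w : Fin n → Fin n → ℝ)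
    (hsymm : ∀ i j, w i j = w j i) (hnonneg : ∀ i j, 0 ≤ w i j)
    (α : ℕ → ℝ) (hαpos : ∀ m, 0 < α m) (hαmono : Monotone α)
    (T : HTree n) (hT : T.IsFullTree) (halg : T.SparseSplits w α)
    (Tstar : HTree n) (hTs : Tstar.IsFullTree)
    (hopt : ∀ T' : HTree n, T'.IsFullTree → Tstar.splitCost w ≤ T'.splitCost w) :
    T.splitCost w ≤ (27 * α n / 4) * Real.log n * Tstar.splitCost w :=
  topdown_approximation_general n w hsymm hnonneg α hαpos hαmono T hT halg Tstar hTs
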